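/- Let H be a Hopf ℂ-algebra with comultiplication Δ, counit ε and antipode S, and let ρ be a Fox pairing on H. Then for all x,y ∈ H: ρ(S(x), y) = −S(x_[1])·ρ(x_[2], y) and ρ(x, S(y)) = −ρ(x, y_[1])·S(y_[2]) (Sweedler notation). -/

import Mathlib

open TensorProduct

noncomputable section

namespace Stmt13

variable {H : Type*} [Ring H] [HopfAlgebra ℂ H]

/-- The antipode of `H`. -/
def S : H →ₗ[ℂ] H := HopfAlgebra.antipode ℂ

/-- The comultiplication of `H`. -/
def Δ : H →ₗ[ℂ] H ⊗[ℂ] H := Coalgebra.comul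

/-- The counit of `H`. -/
def ε : H →ₗ[ℂ] ℂ := Coalgebra.counit

/-- The multiplication of `H` as a linear map on the tensor square. -/
def mulH : H ⊗[ℂ] H →ₗ[ℂ] H := LinearMap.mul' ℂ H

/-- The flip `(c ⊗ d)^∘ = d ⊗ c` on `H ⊗[ℂ] H`. -/
def flipT : H ⊗[ℂ] H →ₗ[ℂ] H ⊗[ℂ] H := (TensorProduct.comm ℂ H H).toLinearMap

/-- `H` is cocommutative. -/
def IsCocomm (H : Type*) [Ring H] [HopfAlgebra ℂ H] : Prop :=
  ∀ a : H, (TensorProduct.comm ℂ H H) (Coalgebra.comul (R := ℂ) a) = Coalgebra.comul (R := ℂ) a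

/-- `H` is involutive: the antipode squares to the identity. -/
def IsInvolutive (H : Type*) [Ring H] [HopfAlgebra ℂ H] : Prop :=
  ∀ a : H, S (S a) = a

/-- `ρ` is a Fox pairing: a left Fox derivative in its first argument and a
right Fox derivative in its second argument. -/
def IsFoxPairing (ρ : H →ₗ[ℂ] H →ₗ[ℂ] H) : Prop :=
  (∀ a b c : H, ρ (a * b) c = ε b • ρ a c + a * ρ b c) ∧
  (∀ a b c : H, ρ c (a * b) = ρ c a * b + ε a • ρ c b)

/-- `ρ` is antisymmetric: its transpose `ρ̄(a,b) = S(ρ(S b, S a))` equals `−ρ`. -/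
def IsAntisymmetric (ρ : H →ₗ[ℂ] H →ₗ[ℂ] H) : Prop :=
  ∀ a b : H, S (ρ (S b) (S a)) = - ρ a b

/-- `(x ⊗ y) ⊗ z ↦ y * S(z) * x`. -/
def firstFac : (H ⊗[ℂ] H) ⊗[ℂ] H →ₗ[ℂ] H :=
  (mulH ∘ₗ (TensorProduct.map mulH LinearMap.id) ∘ₗ
    ((TensorProduct.assoc ℂ H H H).trans (TensorProduct.comm ℂ H (H ⊗[ℂ] H))).toLinearMap)
  ∘ₗ TensorProduct.map (LinearMap.id : H ⊗[ℂ] H →ₗ[ℂ] H ⊗[ℂ] H) S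

/-- `ρ` as a linear map on the tensor square. -/
def ρT (ρ : H →ₗ[ℂ] H →ₗ[ℂ] H) : H ⊗[ℂ] H →ₗ[ℂ] H := TensorProduct.lift ρ

/-- The Massuyeau–Turaev double bracket associated with a Fox pairing, as a linear map:
`a ⊗ b ↦ b₍₁₎ S(ρ(a₍₂₎,b₍₂₎)₍₁₎) a₍₁₎ ⊗ ρ(a₍₂₎,b₍₂₎)₍₂₎`. -/
def dbrMap (ρ : H →ₗ[ℂ] H →ₗ[ℂ] H) : H ⊗[ℂ] H →ₗ[ℂ] H ⊗[ℂ] H :=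
  (TensorProduct.map firstFac LinearMap.id)
  ∘ₗ (TensorProduct.assoc ℂ (H ⊗[ℂ] H) H H).symm.toLinearMap
  ∘ₗ (TensorProduct.map LinearMap.id (Δ ∘ₗ ρT ρ))
  ∘ₗ (TensorProduct.tensorTensorTensorComm ℂ H H H H).toLinearMap
  ∘ₗ (TensorProduct.map Δ Δ)

section FoxDerivative

variable {R A : Type*} [CommSemiring R] [Ring A] [HopfAlgebra R A]

open Coalgebra HopfAlgebra

def IsLeftFoxDerivative (f : A →ₗ[R] A) : Prop :=
  ∀ a b : A, f (a * b) = counit (R := R) b • f a + a * f b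

def IsRightFoxDerivative (f : A →ₗ[R] A) : Prop :=
  ∀ a b : A, f (a * b) = f a * b + counit (R := R) a • f b

theorem IsLeftFoxDerivative.map_one {f : A →ₗ[R] A} (hf : IsLeftFoxDerivative f) : f 1 = 0 := by
  simpa using hf 1 1

theorem IsRightFoxDerivative.map_one {f : A →ₗ[R] A} (hf : IsRightFoxDerivative f) :
    f 1 = 0 := by
  simpa using hf 1 1

/-- Apply `f` to `S(x₍₁₎) x₍₂₎ = ε(x) 1` and expand with the Fox rule. -/
theorem IsLeftFoxDerivative.map_antipode {f : A →ₗ[R] A} (hf : IsLeftFoxDerivative f) (x : A) :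
    f (antipode R x) = -LinearMap.mul' R A (TensorProduct.map (antipode R) f (comul x)) := by
  let r := Repr.arbitrary R x
  have hcounit : ∑ i ∈ r.index, counit (R := R) (r.right i) • f (antipode R (r.left i)) =
      f (antipode R x) := by
    simpa using
      congr(TensorProduct.rid R A $(sum_map_tmul_counit_eq (f ∘ₗ antipode R) x (repr := r)))
  have hzero : ∑ i ∈ r.index, f (antipode R (r.left i) * r.right i) = 0 := by
    rw [← map_sum, sum_antipode_mul_eq_smul r, map_smul, hf.map_one, smul_zero]
  rw [Finset.sum_congr rfl fun i _ => hf _ _, Finset.sum_add_distrib, hcounit] at hzero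
  rw [eq_neg_iff_add_eq_zero, ← r.eq, ← hzero]
  simp [map_sum]

/-- Apply `f` to `y₍₁₎ S(y₍₂₎) = ε(y) 1` and expand with the Fox rule. -/
theorem IsRightFoxDerivative.map_antipode {f : A →ₗ[R] A} (hf : IsRightFoxDerivative f)
    (y : A) :
    f (antipode R y) = -LinearMap.mul' R A (TensorProduct.map f (antipode R) (comul y)) := by
  let r := Repr.arbitrary R y
  have hcounit : ∑ i ∈ r.index, counit (R := R) (r.left i) • f (antipode R (r.right i)) =
      f (antipode R y) := by
    simpa using
      congr(TensorProduct.lid R A $(sum_counit_tmul_map_eq (f ∘ₗ antipode R) y (repr := r)))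
  have hzero : ∑ i ∈ r.index, f (r.left i * antipode R (r.right i)) = 0 := by
    rw [← map_sum, sum_mul_antipode_eq_smul r, map_smul, hf.map_one, smul_zero]
  rw [Finset.sum_congr rfl fun i _ => hf _ _, Finset.sum_add_distrib, hcounit] at hzero
  rw [eq_neg_iff_add_eq_zero, add_comm, ← r.eq, ← hzero]
  simp [map_sum]

end FoxDerivative

/-- For a Fox pairing `ρ` on a Hopf algebra:
`ρ(S x, y) = −S(x₍₁₎) ρ(x₍₂₎, y)` and `ρ(x, S y) = −ρ(x, y₍₁₎) S(y₍₂₎)`. -/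
theorem fox_pairing_antipode
    (ρ : H →ₗ[ℂ] H →ₗ[ℂ] H) (hρ : IsFoxPairing ρ) (x y : H) :
    ρ (S x) y = - mulH (TensorProduct.map S (ρ.flip y) (Δ x)) ∧
    ρ x (S y) = - mulH (TensorProduct.map (ρ x) S (Δ y)) :=
  ⟨IsLeftFoxDerivative.map_antipode (f := ρ.flip y) (fun a b => hρ.1 a b y) x,
    IsRightFoxDerivative.map_antipode (f := ρ x) (fun a b => hρ.2 a b x) y⟩

end Stmt13
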